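/- Let k be a field, G a group, and V a G-graded representation of G, i.e. a k-vector space V with a k-linear action of G and an internal direct sum decomposition V = ⊕_{σ∈G} V_σ into subspaces such that g·V_σ ⊆ V_{gσ} for all g, σ ∈ G. Then the k-linear map R : V⊗V → V⊗V defined by R(u⊗v) = Σ_σ σ·u ⊗ v_σ (where v = Σ_σ v_σ is the decomposition of v into homogeneous components) is a solution of the Hopf equation (R¹²R²³ = R²³R¹³R¹²). -/

import Mathlib

/-! On a tensor `u ⊗ v ⊗ w` with `v ∈ V_σ` and `w ∈ V_τ`, both sides of the Hopf equation give
`(τσ) • u ⊗ τ • v ⊗ w`: on the left `R²³` moves `v` into `V_{τσ}` before `R¹²` acts, on the right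
`R¹²` and then `R¹³` act on `u` by `σ` and `τ`. Such tensors span `V ⊗ V ⊗ V`, since the `V_σ`
span `V`. -/

open TensorProduct LinearMap

section HopfEq

variable (k V : Type*) [Field k] [AddCommGroup V] [Module k V]

/-- The flip map `τ : V ⊗ V → V ⊗ V`, `τ(v ⊗ w) = w ⊗ v`. -/
noncomputable def flipMap : V ⊗[k] V →ₗ[k] V ⊗[k] V :=
  (TensorProduct.comm k V V).toLinearMap

variable {k V}

/-- `R¹² = R ⊗ I` as an endomorphism of `V ⊗ V ⊗ V`. -/
noncomputable def map12 (R : V ⊗[k] V →ₗ[k] V ⊗[k] V) :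
    V ⊗[k] (V ⊗[k] V) →ₗ[k] V ⊗[k] (V ⊗[k] V) :=
  (TensorProduct.assoc k V V V).toLinearMap ∘ₗ R.rTensor V ∘ₗ
    (TensorProduct.assoc k V V V).symm.toLinearMap

/-- `R²³ = I ⊗ R` as an endomorphism of `V ⊗ V ⊗ V`. -/
noncomputable def map23 (R : V ⊗[k] V →ₗ[k] V ⊗[k] V) :
    V ⊗[k] (V ⊗[k] V) →ₗ[k] V ⊗[k] (V ⊗[k] V) :=
  R.lTensor V

/-- `R¹³ = (I ⊗ τ)(R ⊗ I)(I ⊗ τ)` as an endomorphism of `V ⊗ V ⊗ V`. -/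
noncomputable def map13 (R : V ⊗[k] V →ₗ[k] V ⊗[k] V) :
    V ⊗[k] (V ⊗[k] V) →ₗ[k] V ⊗[k] (V ⊗[k] V) :=
  (flipMap k V).lTensor V ∘ₗ map12 R ∘ₗ (flipMap k V).lTensor V

/-- `R` is a solution of the Hopf equation: `R¹²R²³ = R²³R¹³R¹²`. -/
def IsHopfSolution (R : V ⊗[k] V →ₗ[k] V ⊗[k] V) : Prop :=
  map12 R ∘ₗ map23 R = map23 R ∘ₗ map13 R ∘ₗ map12 R

/-- `R` is a solution of the pentagonal equation: `R¹²R¹³R²³ = R²³R¹²`. -/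
def IsPentagonSolution (R : V ⊗[k] V →ₗ[k] V ⊗[k] V) : Prop :=
  map12 R ∘ₗ map13 R ∘ₗ map23 R = map23 R ∘ₗ map12 R

end HopfEq

namespace TensorProduct

variable {R M N P ι κ : Type*} [CommSemiring R] [AddCommMonoid M] [AddCommMonoid N]
  [AddCommMonoid P] [Module R M] [Module R N] [Module R P]

theorem ext_of_iSup_eq_top {p : ι → Submodule R M} {q : κ → Submodule R N}
    (hp : ⨆ i, p i = ⊤) (hq : ⨆ j, q j = ⊤) {f g : M ⊗[R] N →ₗ[R] P}
    (h : ∀ i j, ∀ m ∈ p i, ∀ n ∈ q j, f (m ⊗ₜ n) = g (m ⊗ₜ n)) : f = g := by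
  refine ext' fun m n => ?_
  have hm : m ∈ ⨆ i, p i := hp ▸ Submodule.mem_top
  have hn : n ∈ ⨆ j, q j := hq ▸ Submodule.mem_top
  induction hm using Submodule.iSup_induction' with
  | mem i m hm =>
    induction hn using Submodule.iSup_induction' with
    | mem j n hn => exact h i j m hm n hn
    | zero => simp only [tmul_zero, map_zero]
    | add n n' _ _ hn hn' => simp only [tmul_add, map_add, hn, hn']
  | zero => simp only [zero_tmul, map_zero]
  | add m m' _ _ hm hm' => simp only [add_tmul, map_add, hm, hm']

theorem ext_threefold_of_iSup_eq_top {p : ι → Submodule R N} (hp : ⨆ i, p i = ⊤)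
    {f g : M ⊗[R] (N ⊗[R] N) →ₗ[R] P}
    (h : ∀ m i, ∀ n ∈ p i, ∀ j, ∀ n' ∈ p j, f (m ⊗ₜ (n ⊗ₜ n')) = g (m ⊗ₜ (n ⊗ₜ n'))) :
    f = g :=
  ext' fun m => LinearMap.congr_fun <|
    ext_of_iSup_eq_top (f := f ∘ₗ mk R M _ m) (g := g ∘ₗ mk R M _ m) hp hp
      fun i j n hn n' hn' => h m i n hn j n' hn'

end TensorProduct

section LegActions

variable {k V : Type*} [Field k] [AddCommGroup V] [Module k V] {R : V ⊗[k] V →ₗ[k] V ⊗[k] V}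
  {u u' v v' w : V}

theorem map12_tmul_of_eq (h : R (u ⊗ₜ v) = u' ⊗ₜ v) :
    map12 R (u ⊗ₜ (v ⊗ₜ w)) = u' ⊗ₜ (v ⊗ₜ w) := by
  simp only [map12, coe_comp, LinearEquiv.coe_coe, Function.comp_apply, assoc_symm_tmul,
    rTensor_tmul, h, assoc_tmul]

theorem map23_tmul_of_eq (h : R (v ⊗ₜ w) = v' ⊗ₜ w) :
    map23 R (u ⊗ₜ (v ⊗ₜ w)) = u ⊗ₜ (v' ⊗ₜ w) := by
  rw [map23, lTensor_tmul, h]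

theorem map13_tmul_of_eq (h : R (u ⊗ₜ w) = u' ⊗ₜ w) :
    map13 R (u ⊗ₜ (v ⊗ₜ w)) = u' ⊗ₜ (v ⊗ₜ w) := by
  simp only [map13, flipMap, coe_comp, LinearEquiv.coe_coe, Function.comp_apply, lTensor_tmul,
    comm_tmul, map12_tmul_of_eq h]

end LegActions

theorem graded_representation_isHopfSolution (k G V : Type*) [Field k] [Group G]
    [DecidableEq G] [AddCommGroup V] [Module k V] [DistribMulAction G V]
    (Vσ : G → Submodule k V) (hdirect : DirectSum.IsInternal Vσ)
    (hgraded : ∀ (g σ : G) (v : V), v ∈ Vσ σ → g • v ∈ Vσ (g * σ))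
    (R : V ⊗[k] V →ₗ[k] V ⊗[k] V)
    (hR : ∀ (σ : G) (u v : V), v ∈ Vσ σ → R (u ⊗ₜ[k] v) = (σ • u) ⊗ₜ[k] v) :
    IsHopfSolution R := by
  refine ext_threefold_of_iSup_eq_top hdirect.submodule_iSup_eq_top
    fun u σ v hv τ w hw => ?_
  calc (map12 R ∘ₗ map23 R) (u ⊗ₜ (v ⊗ₜ w))
      = map12 R (u ⊗ₜ ((τ • v) ⊗ₜ w)) := congrArg (map12 R) (map23_tmul_of_eq (hR τ v w hw))
    _ = ((τ * σ) • u) ⊗ₜ ((τ • v) ⊗ₜ w) := map12_tmul_of_eq (hR _ u _ (hgraded τ σ v hv))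
    _ = map23 R (map13 R ((σ • u) ⊗ₜ (v ⊗ₜ w))) := by
      rw [map13_tmul_of_eq (hR τ _ w hw), map23_tmul_of_eq (hR τ v w hw), mul_smul]
    _ = (map23 R ∘ₗ map13 R ∘ₗ map12 R) (u ⊗ₜ (v ⊗ₜ w)) := by
      rw [comp_apply, comp_apply, map12_tmul_of_eq (hR σ u v hv)]
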